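/- On ℝ³ with coordinates (m₁,m₂,m₃), the brackets {m₁,m₂}₀ = −m₃, {m₁,m₃}₀ = m₂, {m₂,m₃}₀ = −m₁ and {m₁,m₂}₁ = −m₂, {m₁,m₃}₁ = m₃, {m₂,m₃}₁ = −2m₁ each satisfy the Jacobi identity, and every pencil bracket {·,·}_λ := {·,·}₁ − λ{·,·}₀ is again a Poisson bracket. -/

import Mathlib

/-- ℝ³ with coordinates (m₁, m₂, m₃). -/
abbrev V3 := ℝ × ℝ × ℝ

/-- ∂/∂m₁. -/
noncomputable def pd1 (f : V3 → ℝ) (x : V3) : ℝ := fderiv ℝ f x (1, 0, 0)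
/-- ∂/∂m₂. -/
noncomputable def pd2 (f : V3 → ℝ) (x : V3) : ℝ := fderiv ℝ f x (0, 1, 0)
/-- ∂/∂m₃. -/
noncomputable def pd3 (f : V3 → ℝ) (x : V3) : ℝ := fderiv ℝ f x (0, 0, 1)

/-- The bracket with {m₁,m₂}₀ = −m₃, {m₁,m₃}₀ = m₂, {m₂,m₃}₀ = −m₁. -/
noncomputable def brk0 (f g : V3 → ℝ) (x : V3) : ℝ :=
  (-x.2.2) * (pd1 f x * pd2 g x - pd2 f x * pd1 g x)
    + x.2.1 * (pd1 f x * pd3 g x - pd3 f x * pd1 g x)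
    + (-x.1) * (pd2 f x * pd3 g x - pd3 f x * pd2 g x)

/-- The bracket with {m₁,m₂}₁ = −m₂, {m₁,m₃}₁ = m₃, {m₂,m₃}₁ = −2m₁. -/
noncomputable def brk1 (f g : V3 → ℝ) (x : V3) : ℝ :=
  (-x.2.1) * (pd1 f x * pd2 g x - pd2 f x * pd1 g x)
    + x.2.2 * (pd1 f x * pd3 g x - pd3 f x * pd1 g x)
    + (-2 * x.1) * (pd2 f x * pd3 g x - pd3 f x * pd2 g x)

/-- The pencil bracket {·,·}_λ = {·,·}₁ − λ{·,·}₀. -/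
noncomputable def brkPencil (lam : ℝ) (f g : V3 → ℝ) (x : V3) : ℝ :=
  brk1 f g x - lam * brk0 f g x

noncomputable def sd1 (f : V3 → ℝ) (x v : V3) : ℝ := fderiv ℝ (pd1 f) x v
noncomputable def sd2 (f : V3 → ℝ) (x v : V3) : ℝ := fderiv ℝ (pd2 f) x v
noncomputable def sd3 (f : V3 → ℝ) (x v : V3) : ℝ := fderiv ℝ (pd3 f) x v

lemma diff_pdw (f : V3 → ℝ) (hf : ContDiff ℝ (⊤ : ℕ∞) f) (w : V3) :
    Differentiable ℝ (fun y => fderiv ℝ f y w) :=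
  ((hf.fderiv_right (m := 1) (by exact WithTop.coe_le_coe.mpr le_top)).clm_apply contDiff_const).differentiable one_ne_zero

lemma sd_swap (f : V3 → ℝ) (hf : ContDiff ℝ (⊤ : ℕ∞) f) (x v w : V3) :
    fderiv ℝ (fun y => fderiv ℝ f y w) x v = fderiv ℝ (fun y => fderiv ℝ f y v) x w := by
  rw [fderiv_clm_apply (((hf.fderiv_right (m := 1) (by exact WithTop.coe_le_coe.mpr le_top)).differentiable one_ne_zero) x) (differentiableAt_const w),
      fderiv_clm_apply (((hf.fderiv_right (m := 1) (by exact WithTop.coe_le_coe.mpr le_top)).differentiable one_ne_zero) x) (differentiableAt_const v)]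
  simp
  exact second_derivative_symmetric (fun y => ((hf.differentiable (by simp)) y).hasFDerivAt)
    (((hf.fderiv_right (m := 1) (by exact WithTop.coe_le_coe.mpr le_top)).differentiable one_ne_zero) x).hasFDerivAt v w

lemma sd21 (f : V3 → ℝ) (hf : ContDiff ℝ (⊤ : ℕ∞) f) (x : V3) :
    sd2 f x (1,0,0) = sd1 f x (0,1,0) := sd_swap f hf x (1,0,0) (0,1,0)
lemma sd31 (f : V3 → ℝ) (hf : ContDiff ℝ (⊤ : ℕ∞) f) (x : V3) :
    sd3 f x (1,0,0) = sd1 f x (0,0,1) := sd_swap f hf x (1,0,0) (0,0,1)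
lemma sd32 (f : V3 → ℝ) (hf : ContDiff ℝ (⊤ : ℕ∞) f) (x : V3) :
    sd3 f x (0,1,0) = sd2 f x (0,0,1) := sd_swap f hf x (0,1,0) (0,0,1)

lemma fderiv_brkGen (f g : V3 → ℝ) (hf : ContDiff ℝ (⊤ : ℕ∞) f) (hg : ContDiff ℝ (⊤ : ℕ∞) g)
    (a b c : V3 → ℝ) (x v : V3)
    (ha : DifferentiableAt ℝ a x) (hb : DifferentiableAt ℝ b x) (hc : DifferentiableAt ℝ c x) :
    fderiv ℝ (fun y => a y * (pd1 f y * pd2 g y - pd2 f y * pd1 g y)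
      + b y * (pd1 f y * pd3 g y - pd3 f y * pd1 g y)
      + c y * (pd2 f y * pd3 g y - pd3 f y * pd2 g y)) x v
    = fderiv ℝ a x v * (pd1 f x * pd2 g x - pd2 f x * pd1 g x)
      + a x * (sd1 f x v * pd2 g x + pd1 f x * sd2 g x v - sd2 f x v * pd1 g x - pd2 f x * sd1 g x v)
      + fderiv ℝ b x v * (pd1 f x * pd3 g x - pd3 f x * pd1 g x)
      + b x * (sd1 f x v * pd3 g x + pd1 f x * sd3 g x v - sd3 f x v * pd1 g x - pd3 f x * sd1 g x v)
      + fderiv ℝ c x v * (pd2 f x * pd3 g x - pd3 f x * pd2 g x)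
      + c x * (sd2 f x v * pd3 g x + pd2 f x * sd3 g x v - sd3 f x v * pd2 g x - pd3 f x * sd2 g x v) := by
  have h1f : HasFDerivAt (pd1 f) (fderiv ℝ (pd1 f) x) x := (diff_pdw f hf (1,0,0) x).hasFDerivAt
  have h2f : HasFDerivAt (pd2 f) (fderiv ℝ (pd2 f) x) x := (diff_pdw f hf (0,1,0) x).hasFDerivAt
  have h3f : HasFDerivAt (pd3 f) (fderiv ℝ (pd3 f) x) x := (diff_pdw f hf (0,0,1) x).hasFDerivAt
  have h1g : HasFDerivAt (pd1 g) (fderiv ℝ (pd1 g) x) x := (diff_pdw g hg (1,0,0) x).hasFDerivAt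
  have h2g : HasFDerivAt (pd2 g) (fderiv ℝ (pd2 g) x) x := (diff_pdw g hg (0,1,0) x).hasFDerivAt
  have h3g : HasFDerivAt (pd3 g) (fderiv ℝ (pd3 g) x) x := (diff_pdw g hg (0,0,1) x).hasFDerivAt
  have HA := ha.hasFDerivAt.mul ((h1f.mul h2g).sub (h2f.mul h1g))
  have HB := hb.hasFDerivAt.mul ((h1f.mul h3g).sub (h3f.mul h1g))
  have HC := hc.hasFDerivAt.mul ((h2f.mul h3g).sub (h3f.mul h2g))
  have H := (HA.add HB).add HC
  rw [(show HasFDerivAt (fun y => a y * (pd1 f y * pd2 g y - pd2 f y * pd1 g y) + b y * (pd1 f y * pd3 g y - pd3 f y * pd1 g y) + c y * (pd2 f y * pd3 g y - pd3 f y * pd2 g y)) _ x from H).fderiv]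
  simp only [ContinuousLinearMap.add_apply, ContinuousLinearMap.smul_apply,
    ContinuousLinearMap.sub_apply, smul_eq_mul, sd1, sd2, sd3, Pi.mul_apply, Pi.sub_apply]
  ring

lemma dcoord1 (x v : V3) : fderiv ℝ (fun y : V3 => y.1) x v = v.1 := by
  rw [hasFDerivAt_fst.fderiv]; rfl
lemma dcoord2 (x v : V3) : fderiv ℝ (fun y : V3 => y.2.1) x v = v.2.1 := by
  have : HasFDerivAt (fun y : V3 => y.2.1)
      ((ContinuousLinearMap.fst ℝ ℝ ℝ).comp (ContinuousLinearMap.snd ℝ ℝ (ℝ×ℝ))) x :=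
    (hasFDerivAt_fst).comp x hasFDerivAt_snd
  rw [this.fderiv]; rfl
lemma dcoord3 (x v : V3) : fderiv ℝ (fun y : V3 => y.2.2) x v = v.2.2 := by
  have : HasFDerivAt (fun y : V3 => y.2.2)
      ((ContinuousLinearMap.snd ℝ ℝ ℝ).comp (ContinuousLinearMap.snd ℝ ℝ (ℝ×ℝ))) x :=
    (hasFDerivAt_snd).comp x hasFDerivAt_snd
  rw [this.fderiv]; rfl

lemma pd_brk0 (f g : V3 → ℝ) (hf : ContDiff ℝ (⊤ : ℕ∞) f) (hg : ContDiff ℝ (⊤ : ℕ∞) g) (x v : V3) :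
    fderiv ℝ (brk0 f g) x v =
      (-v.2.2) * (pd1 f x * pd2 g x - pd2 f x * pd1 g x)
      + (-x.2.2) * (sd1 f x v * pd2 g x + pd1 f x * sd2 g x v - sd2 f x v * pd1 g x - pd2 f x * sd1 g x v)
      + v.2.1 * (pd1 f x * pd3 g x - pd3 f x * pd1 g x)
      + x.2.1 * (sd1 f x v * pd3 g x + pd1 f x * sd3 g x v - sd3 f x v * pd1 g x - pd3 f x * sd1 g x v)
      + (-v.1) * (pd2 f x * pd3 g x - pd3 f x * pd2 g x)
      + (-x.1) * (sd2 f x v * pd3 g x + pd2 f x * sd3 g x v - sd3 f x v * pd2 g x - pd3 f x * sd2 g x v) := by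
  have h := fderiv_brkGen f g hf hg (fun y => -y.2.2) (fun y => y.2.1) (fun y => -y.1) x v
    ((differentiable_snd.snd x).neg) (differentiable_snd.fst x) ((differentiable_fst x).neg)
  rw [show (fun y : V3 => -y.2.2) = (fun y : V3 => -(fun z : V3 => z.2.2) y) from rfl,
      fderiv_fun_neg, show (fun y : V3 => -y.1) = (fun y : V3 => -(fun z : V3 => z.1) y) from rfl,
      fderiv_fun_neg] at h
  simp only [ContinuousLinearMap.neg_apply, dcoord1, dcoord2, dcoord3] at h
  exact h

lemma pd_brk1 (f g : V3 → ℝ) (hf : ContDiff ℝ (⊤ : ℕ∞) f) (hg : ContDiff ℝ (⊤ : ℕ∞) g) (x v : V3) :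
    fderiv ℝ (brk1 f g) x v =
      (-v.2.1) * (pd1 f x * pd2 g x - pd2 f x * pd1 g x)
      + (-x.2.1) * (sd1 f x v * pd2 g x + pd1 f x * sd2 g x v - sd2 f x v * pd1 g x - pd2 f x * sd1 g x v)
      + v.2.2 * (pd1 f x * pd3 g x - pd3 f x * pd1 g x)
      + x.2.2 * (sd1 f x v * pd3 g x + pd1 f x * sd3 g x v - sd3 f x v * pd1 g x - pd3 f x * sd1 g x v)
      + (-2 * v.1) * (pd2 f x * pd3 g x - pd3 f x * pd2 g x)
      + (-2 * x.1) * (sd2 f x v * pd3 g x + pd2 f x * sd3 g x v - sd3 f x v * pd2 g x - pd3 f x * sd2 g x v) := by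
  have h := fderiv_brkGen f g hf hg (fun y => -y.2.1) (fun y => y.2.2) (fun y => -2 * y.1) x v
    ((differentiable_snd.fst x).neg) (differentiable_snd.snd x) ((differentiable_fst x).const_mul (-2))
  rw [show (fun y : V3 => -y.2.1) = (fun y : V3 => -(fun z : V3 => z.2.1) y) from rfl,
      fderiv_fun_neg, fderiv_const_mul (differentiable_fst x)] at h
  simp only [ContinuousLinearMap.neg_apply, ContinuousLinearMap.smul_apply, smul_eq_mul,
    dcoord1, dcoord2, dcoord3] at h
  exact h

lemma diff_brk0 (f g : V3 → ℝ) (hf : ContDiff ℝ (⊤ : ℕ∞) f) (hg : ContDiff ℝ (⊤ : ℕ∞) g) :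
    Differentiable ℝ (brk0 f g) :=
  ((differentiable_snd.snd.neg.mul (((diff_pdw f hf (1,0,0)).mul (diff_pdw g hg (0,1,0))).sub
      ((diff_pdw f hf (0,1,0)).mul (diff_pdw g hg (1,0,0))))).add
    (differentiable_snd.fst.mul (((diff_pdw f hf (1,0,0)).mul (diff_pdw g hg (0,0,1))).sub
      ((diff_pdw f hf (0,0,1)).mul (diff_pdw g hg (1,0,0)))))).add
    (differentiable_fst.neg.mul (((diff_pdw f hf (0,1,0)).mul (diff_pdw g hg (0,0,1))).sub
      ((diff_pdw f hf (0,0,1)).mul (diff_pdw g hg (0,1,0)))))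

lemma diff_brk1 (f g : V3 → ℝ) (hf : ContDiff ℝ (⊤ : ℕ∞) f) (hg : ContDiff ℝ (⊤ : ℕ∞) g) :
    Differentiable ℝ (brk1 f g) :=
  ((differentiable_snd.fst.neg.mul (((diff_pdw f hf (1,0,0)).mul (diff_pdw g hg (0,1,0))).sub
      ((diff_pdw f hf (0,1,0)).mul (diff_pdw g hg (1,0,0))))).add
    (differentiable_snd.snd.mul (((diff_pdw f hf (1,0,0)).mul (diff_pdw g hg (0,0,1))).sub
      ((diff_pdw f hf (0,0,1)).mul (diff_pdw g hg (1,0,0)))))).add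
    (((differentiable_const (-2)).mul differentiable_fst).mul (((diff_pdw f hf (0,1,0)).mul (diff_pdw g hg (0,0,1))).sub
      ((diff_pdw f hf (0,0,1)).mul (diff_pdw g hg (0,1,0)))))

lemma pd_pencil (lam : ℝ) (f g : V3 → ℝ) (hf : ContDiff ℝ (⊤ : ℕ∞) f) (hg : ContDiff ℝ (⊤ : ℕ∞) g) (x v : V3) :
    fderiv ℝ (brkPencil lam f g) x v
      = fderiv ℝ (brk1 f g) x v - lam * fderiv ℝ (brk0 f g) x v := by
  have h : fderiv ℝ (fun y => brk1 f g y - lam * brk0 f g y) x v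
      = fderiv ℝ (brk1 f g) x v - lam * fderiv ℝ (brk0 f g) x v := by
    rw [fderiv_fun_sub (diff_brk1 f g hf hg x) ((diff_brk0 f g hf hg x).const_mul lam),
        fderiv_const_mul (diff_brk0 f g hf hg x)]
    simp
  exact h
/- Statement 18: each of the two brackets satisfies the Jacobi identity, and
every pencil bracket {·,·}_λ = {·,·}₁ − λ{·,·}₀ is again a Poisson bracket. -/
set_option maxHeartbeats 4000000 in
theorem stmt_18 :
    (∀ f g h : V3 → ℝ, ContDiff ℝ (⊤ : ℕ∞) f → ContDiff ℝ (⊤ : ℕ∞) g → ContDiff ℝ (⊤ : ℕ∞) h →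
      ∀ x : V3,
        brk0 (brk0 f g) h x + brk0 (brk0 g h) f x + brk0 (brk0 h f) g x = 0)
    ∧ (∀ f g h : V3 → ℝ, ContDiff ℝ (⊤ : ℕ∞) f → ContDiff ℝ (⊤ : ℕ∞) g → ContDiff ℝ (⊤ : ℕ∞) h →
        ∀ x : V3,
          brk1 (brk1 f g) h x + brk1 (brk1 g h) f x + brk1 (brk1 h f) g x = 0)
    ∧ (∀ lam : ℝ, ∀ f g h : V3 → ℝ,
        ContDiff ℝ (⊤ : ℕ∞) f → ContDiff ℝ (⊤ : ℕ∞) g → ContDiff ℝ (⊤ : ℕ∞) h →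
        ∀ x : V3,
          brkPencil lam (brkPencil lam f g) h x
            + brkPencil lam (brkPencil lam g h) f x
            + brkPencil lam (brkPencil lam h f) g x = 0) := by
  refine ⟨?_, ?_, ?_⟩
  · intro f g h hf hg hh x
    have Q1 := pd_brk0 f g hf hg x (1,0,0)
    have Q2 := pd_brk0 f g hf hg x (0,1,0)
    have Q3 := pd_brk0 f g hf hg x (0,0,1)
    have R1 := pd_brk0 g h hg hh x (1,0,0)
    have R2 := pd_brk0 g h hg hh x (0,1,0)
    have R3 := pd_brk0 g h hg hh x (0,0,1)
    have S1 := pd_brk0 h f hh hf x (1,0,0)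
    have S2 := pd_brk0 h f hh hf x (0,1,0)
    have S3 := pd_brk0 h f hh hf x (0,0,1)
    have s21f := sd21 f hf x; have s31f := sd31 f hf x; have s32f := sd32 f hf x
    have s21g := sd21 g hg x; have s31g := sd31 g hg x; have s32g := sd32 g hg x
    have s21h := sd21 h hh x; have s31h := sd31 h hh x; have s32h := sd32 h hh x
    norm_num at Q1 Q2 Q3 R1 R2 R3 S1 S2 S3 s21f s31f s32f s21g s31g s32g s21h s31h s32h
    simp only [s21f, s31f, s32f, s21g, s31g, s32g, s21h, s31h, s32h] at Q1 Q2 Q3 R1 R2 R3 S1 S2 S3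
    simp only [brk0, pd1, pd2, pd3]
    norm_num
    rw [Q1, Q2, Q3, R1, R2, R3, S1, S2, S3]
    simp only [pd1, pd2, pd3]
    norm_num
    ring
  · intro f g h hf hg hh x
    have Q1 := pd_brk1 f g hf hg x (1,0,0)
    have Q2 := pd_brk1 f g hf hg x (0,1,0)
    have Q3 := pd_brk1 f g hf hg x (0,0,1)
    have R1 := pd_brk1 g h hg hh x (1,0,0)
    have R2 := pd_brk1 g h hg hh x (0,1,0)
    have R3 := pd_brk1 g h hg hh x (0,0,1)
    have S1 := pd_brk1 h f hh hf x (1,0,0)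
    have S2 := pd_brk1 h f hh hf x (0,1,0)
    have S3 := pd_brk1 h f hh hf x (0,0,1)
    have s21f := sd21 f hf x; have s31f := sd31 f hf x; have s32f := sd32 f hf x
    have s21g := sd21 g hg x; have s31g := sd31 g hg x; have s32g := sd32 g hg x
    have s21h := sd21 h hh x; have s31h := sd31 h hh x; have s32h := sd32 h hh x
    norm_num at Q1 Q2 Q3 R1 R2 R3 S1 S2 S3 s21f s31f s32f s21g s31g s32g s21h s31h s32h
    simp only [s21f, s31f, s32f, s21g, s31g, s32g, s21h, s31h, s32h] at Q1 Q2 Q3 R1 R2 R3 S1 S2 S3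
    simp only [brk1, pd1, pd2, pd3]
    norm_num
    rw [Q1, Q2, Q3, R1, R2, R3, S1, S2, S3]
    simp only [pd1, pd2, pd3]
    norm_num
    ring
  · intro lam f g h hf hg hh x
    have Q1 := pd_pencil lam f g hf hg x (1,0,0)
    have Q2 := pd_pencil lam f g hf hg x (0,1,0)
    have Q3 := pd_pencil lam f g hf hg x (0,0,1)
    have R1 := pd_pencil lam g h hg hh x (1,0,0)
    have R2 := pd_pencil lam g h hg hh x (0,1,0)
    have R3 := pd_pencil lam g h hg hh x (0,0,1)
    have S1 := pd_pencil lam h f hh hf x (1,0,0)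
    have S2 := pd_pencil lam h f hh hf x (0,1,0)
    have S3 := pd_pencil lam h f hh hf x (0,0,1)
    rw [pd_brk0 f g hf hg x (1,0,0), pd_brk1 f g hf hg x (1,0,0)] at Q1
    rw [pd_brk0 f g hf hg x (0,1,0), pd_brk1 f g hf hg x (0,1,0)] at Q2
    rw [pd_brk0 f g hf hg x (0,0,1), pd_brk1 f g hf hg x (0,0,1)] at Q3
    rw [pd_brk0 g h hg hh x (1,0,0), pd_brk1 g h hg hh x (1,0,0)] at R1
    rw [pd_brk0 g h hg hh x (0,1,0), pd_brk1 g h hg hh x (0,1,0)] at R2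
    rw [pd_brk0 g h hg hh x (0,0,1), pd_brk1 g h hg hh x (0,0,1)] at R3
    rw [pd_brk0 h f hh hf x (1,0,0), pd_brk1 h f hh hf x (1,0,0)] at S1
    rw [pd_brk0 h f hh hf x (0,1,0), pd_brk1 h f hh hf x (0,1,0)] at S2
    rw [pd_brk0 h f hh hf x (0,0,1), pd_brk1 h f hh hf x (0,0,1)] at S3
    have s21f := sd21 f hf x; have s31f := sd31 f hf x; have s32f := sd32 f hf x
    have s21g := sd21 g hg x; have s31g := sd31 g hg x; have s32g := sd32 g hg x
    have s21h := sd21 h hh x; have s31h := sd31 h hh x; have s32h := sd32 h hh x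
    norm_num at Q1 Q2 Q3 R1 R2 R3 S1 S2 S3 s21f s31f s32f s21g s31g s32g s21h s31h s32h
    simp only [s21f, s31f, s32f, s21g, s31g, s32g, s21h, s31h, s32h] at Q1 Q2 Q3 R1 R2 R3 S1 S2 S3
    simp only [brkPencil, brk0, brk1, pd1, pd2, pd3]
    norm_num
    rw [Q1, Q2, Q3, R1, R2, R3, S1, S2, S3]
    simp only [pd1, pd2, pd3]
    norm_num
    ring
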